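/- The operator Γ is upper semicontinuous along d̂-convergent sequences: for any sequence (ℓ^n)_{n≥1} ⊂ 𝕄 and ℓ ∈ 𝕄 with d̂(ℓ^n, ℓ) → 0, one has limsup_{n→∞} Γ[ℓ^n]_t ≤ Γ[ℓ]_t for all t ≥ 0. -/

import Mathlib

open MeasureTheory ProbabilityTheory Filter Set
open scoped ENNReal NNReal Classical

noncomputable section

/-- The first hitting time of `(-∞, 0]` by the path `x` after time `0`,
with value `∞` if the path never hits `(-∞, 0]`. -/
def hitTime (x : ℝ → ℝ) : ℝ≥0∞ :=
  ⨅ s ∈ {s : ℝ | 0 ≤ s ∧ x s ≤ 0}, ENNReal.ofReal s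

/-- Membership in the set `𝕄` of càdlàg non-decreasing functions `ℓ : [-1, ∞) → ℝ`
(encoded as functions on `ℝ`) which vanish on `[-1, 0)` and satisfy `lim_{t → ∞} ℓ t ≤ 1`
(equivalently, `ℓ ≤ 1` everywhere, by monotonicity). -/
structure MemM (ℓ : ℝ → ℝ) : Prop where
  zero_on_neg : ∀ t : ℝ, -1 ≤ t → t < 0 → ℓ t = 0
  mono : MonotoneOn ℓ (Set.Ici (-1 : ℝ))
  right_cont : ∀ t : ℝ, -1 ≤ t → ContinuousWithinAt ℓ (Set.Ici t) t
  le_one : ∀ t : ℝ, -1 ≤ t → ℓ t ≤ 1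

/-- The Lévy distance `d` on `𝕄`. -/
def levyDist (ℓ ℓ' : ℝ → ℝ) : ℝ :=
  sInf {ε : ℝ | 0 < ε ∧ ∀ t : ℝ, 0 ≤ t → ℓ' t ≤ ℓ (t + ε) + ε ∧ ℓ (t - ε) - ε ≤ ℓ' t}

/-- The path `ℓ` stopped at time `t`. -/
def stopAt (ℓ : ℝ → ℝ) (t : ℝ) : ℝ → ℝ := fun s => ℓ (min t s)

/-- The metric `d̂(ℓ, ℓ') = ∫₀^∞ e^{-s} (d(ℓ_{s∧·}, ℓ'_{s∧·}) ∧ 1) ds` on `𝕄`. -/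
def dHat (ℓ ℓ' : ℝ → ℝ) : ℝ :=
  ∫ s in Set.Ioi (0 : ℝ), Real.exp (-s) * min (levyDist (stopAt ℓ s) (stopAt ℓ' s)) 1

/-- A process `B : ℝ → Ω → ℝ` (considered for times `t ≥ 0`) is a standard Brownian motion
under `P`: it starts at `0`, has a.s. continuous paths, independent increments, and Gaussian
increments `B t - B s ~ N(0, t - s)`. -/
structure IsStandardBM {Ω : Type*} [MeasurableSpace Ω] (P : Measure Ω) (B : ℝ → Ω → ℝ) :
    Prop where
  meas : ∀ t : ℝ, Measurable (B t)
  init : ∀ᵐ ω ∂P, B 0 ω = 0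
  cont : ∀ᵐ ω ∂P, ContinuousOn (fun t => B t ω) (Set.Ici (0 : ℝ))
  incr_law : ∀ s t : ℝ, 0 ≤ s → s ≤ t →
    P.map (fun ω => B t ω - B s ω) = gaussianReal 0 (Real.toNNReal (t - s))
  indep_incr : ∀ (n : ℕ) (τ : Fin (n + 1) → ℝ), Monotone τ → (∀ i, 0 ≤ τ i) →
    iIndepFun
      (fun i : Fin n => fun ω => B (τ i.succ) ω - B (τ i.castSucc) ω) P

/-- The filtration generated by the family of Brownian motions `B i`, evaluated at time `t`. -/
def bmFiltration {Ω ι : Type*} [MeasurableSpace Ω] (B : ι → ℝ → Ω → ℝ) (t : ℝ) :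
    MeasurableSpace Ω :=
  ⨆ (i : ι) (s : ℝ) (_ : 0 ≤ s) (_ : s ≤ t), MeasurableSpace.comap (B i s) inferInstance

/-- Set-up of the `N`-particle system: i.i.d. initial conditions `Z i` with common law `θ`
(supported on `[0,∞)`), independent standard Brownian motions `B i`, with the pairs
`(Z i, B i)` mutually independent and `Z i` independent of `B i`. -/
structure ParticleSetup (N : ℕ) {Ω : Type*} [MeasurableSpace Ω] (P : Measure Ω)
    (θ : Measure ℝ) (Z : Fin N → Ω → ℝ) (B : Fin N → ℝ → Ω → ℝ) : Prop where
  isProb : IsProbabilityMeasure P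
  z_meas : ∀ i, Measurable (Z i)
  z_law : ∀ i, P.map (Z i) = θ
  z_nonneg : ∀ i, ∀ᵐ ω ∂P, 0 ≤ Z i ω
  bm : ∀ i, IsStandardBM P (B i)
  indep_pairs : iIndepFun
    (fun (i : Fin N) => fun ω => ((Z i ω, fun t => B i t ω) : ℝ × (ℝ → ℝ))) P
  indep_zb : ∀ i, IndepFun (Z i) (fun ω => (fun t => B i t ω) : Ω → ℝ → ℝ) P

/-- `(X, L)` is a solution of the interacting particle system
`X^i_t = Z^i + β t + B^i_t − G(L_t)`, `L_t = (1/N) ∑_i 1{τ_i ≤ t}`. -/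
structure IsParticleSolution (N : ℕ) (β : ℝ) (G : ℝ → ℝ) {Ω : Type*} [MeasurableSpace Ω]
    (P : Measure Ω) (Z : Fin N → Ω → ℝ) (B : Fin N → ℝ → Ω → ℝ)
    (X : Fin N → ℝ → Ω → ℝ) (L : Ω → ℝ → ℝ) : Prop where
  memM : ∀ᵐ ω ∂P, MemM (L ω)
  adapted : ∀ t : ℝ, 0 ≤ t → Measurable[bmFiltration B t] (fun ω => L ω t)
  eqX : ∀ᵐ ω ∂P, ∀ i, ∀ t : ℝ, 0 ≤ t →
    X i t ω = Z i ω + β * t + B i t ω - G (L ω t)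
  eqL : ∀ᵐ ω ∂P, ∀ t : ℝ, 0 ≤ t →
    L ω t = (N : ℝ)⁻¹ *
      (Finset.univ.filter fun i : Fin N =>
        hitTime (fun s => X i s ω) ≤ ENNReal.ofReal t).card

/-- Set-up for the McKean–Vlasov equation: an initial condition `Z ≥ 0` with law `θ` and an
independent standard Brownian motion `B`. -/
structure MVSetup {Ω : Type*} [MeasurableSpace Ω] (P : Measure Ω) (θ : Measure ℝ)
    (Z : Ω → ℝ) (B : ℝ → Ω → ℝ) : Prop where
  isProb : IsProbabilityMeasure P
  z_meas : Measurable Z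
  z_law : P.map Z = θ
  z_nonneg : ∀ᵐ ω ∂P, 0 ≤ Z ω
  bm : IsStandardBM P B
  indep : IndepFun Z (fun ω => (fun t => B t ω) : Ω → ℝ → ℝ) P

/-- `(X, Λ)` is a solution of the McKean–Vlasov equation
`X_t = Z + β t + B_t − G(Λ_t)`, `Λ_t = P(τ ≤ t)` with `τ = inf{t ≥ 0 : X_t ≤ 0}`. -/
structure IsMVSolution (β : ℝ) (G : ℝ → ℝ) {Ω : Type*} [MeasurableSpace Ω] (P : Measure Ω)
    (Z : Ω → ℝ) (B : ℝ → Ω → ℝ) (X : ℝ → Ω → ℝ) (Λ : ℝ → ℝ) : Prop where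
  memM : MemM Λ
  eqX : ∀ᵐ ω ∂P, ∀ t : ℝ, 0 ≤ t → X t ω = Z ω + β * t + B t ω - G (Λ t)
  eqΛ : ∀ t : ℝ, 0 ≤ t →
    Λ t = (P {ω | hitTime (fun s => X s ω) ≤ ENNReal.ofReal t}).toReal


/-- The operator `Γ : 𝕄 → 𝕄`, `Γ[ℓ]_t = P(τ^ℓ ≤ t)` where
`X^ℓ_t = Z + β t + B_t − G(ℓ_t)` and `τ^ℓ = inf{t ≥ 0 : X^ℓ_t ≤ 0}`
(extended by `0` for `t < 0`). -/
def GammaOp {Ω : Type*} [MeasurableSpace Ω] (P : Measure Ω) (Z : Ω → ℝ) (B : ℝ → Ω → ℝ)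
    (β : ℝ) (G : ℝ → ℝ) (ℓ : ℝ → ℝ) (t : ℝ) : ℝ :=
  if t < 0 then 0
  else (P {ω | hitTime (fun s => Z ω + β * s + B s ω - G (ℓ s)) ≤ ENNReal.ofReal t}).toReal


/-!
Fix `t ≥ 0`. If `d̂(ℓⁿ, ℓ)` is small then, for the paths stopped at every `s ∈ [t + 2, t + 3]`,
the Lévy distance is below `δ`, which forces `ℓⁿ_u ≤ ℓ_{u+δ} + δ` for `u ≤ t + 1`. Now let `ω`
have a continuous Brownian path and suppose that, for infinitely many `n`, the path of `X^{ℓⁿ}`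
gets within `1/k` of `(-∞, 0]` before time `t + 1/k`, for every `k`. Since `G` is monotone, this
yields times `q_j ≤ t + 1/j` with `Z + β q_j + B_{q_j} ≤ 1/j + G(ℓ_{q_j + 1/j} + 1/j)`. A limit
point `s ≤ t` of the `q_j` then satisfies `X^ℓ_s ≤ 0`, because `B` is continuous and `G ∘ ℓ` is
right-continuous and non-decreasing. As `{τ^{ℓⁿ} ≤ t}` lies, up to a null set, in the
corresponding countably described event, the reverse Fatou lemma for sets gives
`limsup Γ[ℓⁿ]_t ≤ Γ[ℓ]_t`.
-/

open Topology

namespace MemM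

variable {ℓ : ℝ → ℝ}

lemma nonneg (h : MemM ℓ) {u : ℝ} (hu : -1 ≤ u) : 0 ≤ ℓ u :=
  h.zero_on_neg (-1) le_rfl (by norm_num) ▸ h.mono (mem_Ici.2 le_rfl) hu hu

lemma mem_Icc (h : MemM ℓ) {u : ℝ} (hu : -1 ≤ u) : ℓ u ∈ Icc (-1 : ℝ) 1 :=
  ⟨(h.nonneg hu).trans' (by norm_num), h.le_one u hu⟩

lemma min_add_mem_Icc (h : MemM ℓ) {u ε : ℝ} (hu : -1 ≤ u) (hε : 0 ≤ ε) :
    min (ℓ u + ε) 1 ∈ Icc (-1 : ℝ) 1 :=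
  ⟨le_min (by linarith [h.nonneg hu]) (by norm_num), min_le_right _ _⟩

lemma stopAt_memM (h : MemM ℓ) {s : ℝ} (hs : 0 ≤ s) : MemM (stopAt ℓ s) where
  zero_on_neg t ht ht0 := by
    simp only [stopAt, min_eq_right (ht0.le.trans hs)]
    exact h.zero_on_neg t ht ht0
  mono a ha b hb hab := h.mono (show -1 ≤ min s a from le_min (by linarith) ha)
    (show -1 ≤ min s b from le_min (by linarith) hb) (min_le_min_left s hab)
  right_cont t ht := (h.right_cont _ (le_min (by linarith) ht)).comp
    (continuous_const.min continuous_id).continuousWithinAt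
    fun u hu => min_le_min_left s (mem_Ici.1 hu)
  le_one t ht := h.le_one _ (le_min (by linarith) ht)

lemma monotone_stopAt_max (h : MemM ℓ) {c : ℝ} (hc : -1 ≤ c) :
    Monotone fun s => stopAt ℓ (max s 0) c := fun a b hab =>
  h.mono (show -1 ≤ min (max a 0) c from le_min (by simp) hc)
    (show -1 ≤ min (max b 0) c from le_min (by simp) hc)
    (min_le_min_right c (max_le_max_right 0 hab))

lemma continuousWithinAt_comp (h : MemM ℓ) {G : ℝ → ℝ} (hG : ContinuousOn G (Icc (-1) 1))
    {s : ℝ} (hs : -1 ≤ s) : ContinuousWithinAt (fun u => G (ℓ u)) (Ici s) s :=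
  (hG _ (h.mem_Icc hs)).comp (h.right_cont s hs) fun _ hu => h.mem_Icc (hs.trans hu)

end MemM

def levySet (ℓ ℓ' : ℝ → ℝ) : Set ℝ :=
  {ε | 0 < ε ∧ ∀ t : ℝ, 0 ≤ t → ℓ' t ≤ ℓ (t + ε) + ε ∧ ℓ (t - ε) - ε ≤ ℓ' t}

lemma levyDist_eq_sInf (ℓ ℓ' : ℝ → ℝ) : levyDist ℓ ℓ' = sInf (levySet ℓ ℓ') := rfl

section Levy

variable {ℓ₁ ℓ₂ : ℝ → ℝ}

lemma bddBelow_levySet : BddBelow (levySet ℓ₁ ℓ₂) :=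
  ⟨0, fun _ hε => hε.1.le⟩

lemma levyDist_nonneg : 0 ≤ levyDist ℓ₁ ℓ₂ :=
  Real.sInf_nonneg fun _ hε => hε.1.le

lemma one_mem_levySet (h₁ : MemM ℓ₁) (h₂ : MemM ℓ₂) : (1 : ℝ) ∈ levySet ℓ₁ ℓ₂ := by
  refine ⟨one_pos, fun t ht => ⟨?_, ?_⟩⟩
  · linarith [h₂.le_one t (by linarith), h₁.nonneg (u := t + 1) (by linarith)]
  · linarith [h₁.le_one (t - 1) (by linarith), h₂.nonneg (u := t) (by linarith)]

lemma levyDist_le_one (h₁ : MemM ℓ₁) (h₂ : MemM ℓ₂) : levyDist ℓ₁ ℓ₂ ≤ 1 :=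
  csInf_le bddBelow_levySet (one_mem_levySet h₁ h₂)

lemma mem_levySet_of_le (h₁ : MemM ℓ₁) {ε ε' : ℝ} (hε : ε ∈ levySet ℓ₁ ℓ₂) (hεε' : ε ≤ ε')
    (hε' : ε' ≤ 1) : ε' ∈ levySet ℓ₁ ℓ₂ := by
  refine ⟨hε.1.trans_le hεε', fun t ht => ?_⟩
  obtain ⟨hup, hlow⟩ := hε.2 t ht
  constructor
  · linarith [h₁.mono (a := t + ε) (b := t + ε') (mem_Ici.2 (by linarith [hε.1]))
      (mem_Ici.2 (by linarith [hε.1])) (by linarith)]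
  · linarith [h₁.mono (a := t - ε') (b := t - ε) (mem_Ici.2 (by linarith))
      (mem_Ici.2 (by linarith)) (by linarith)]

lemma le_of_forall_rat_gt {f g : ℝ → ℝ} {t : ℝ} (hf : ContinuousWithinAt f (Ici t) t)
    (hg : ContinuousWithinAt g (Ici t) t) (h : ∀ q : ℚ, t < q → f q ≤ g q) : f t ≤ g t := by
  obtain ⟨u, -, hut, hu⟩ := Real.exists_seq_rat_strictAnti_tendsto t
  have hu' : Tendsto (fun n => (u n : ℝ)) atTop (𝓝[≥] t) :=
    tendsto_nhdsWithin_iff.2 ⟨hu, Eventually.of_forall fun n => (hut n).le⟩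
  exact le_of_tendsto_of_tendsto (hf.tendsto.comp hu') (hg.tendsto.comp hu')
    (Eventually.of_forall fun n => h _ (hut n))

lemma mem_levySet_of_forall_rat (h₁ : MemM ℓ₁) (h₂ : MemM ℓ₂) {ε : ℝ} (hε0 : 0 < ε)
    (hε1 : ε ≤ 1) (h : ∀ t : ℚ, 0 ≤ (t : ℝ) →
      ℓ₂ t ≤ ℓ₁ (t + ε) + ε ∧ ℓ₁ (t - ε) - ε ≤ ℓ₂ t) : ε ∈ levySet ℓ₁ ℓ₂ := by
  refine ⟨hε0, fun t ht => ⟨?_, ?_⟩⟩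
  · refine le_of_forall_rat_gt (g := fun t => ℓ₁ (t + ε) + ε) (h₂.right_cont t (by linarith)) ?_
      fun q hq => (h q (ht.trans hq.le)).1
    exact ((h₁.right_cont (t + ε) (by linarith)).comp (f := fun u => u + ε)
      (continuous_add_const ε).continuousWithinAt
      fun u (hu : t ≤ u) => mem_Ici.2 (by linarith)).add_const ε
  · refine le_of_forall_rat_gt (f := fun t => ℓ₁ (t - ε) - ε) ?_ (h₂.right_cont t (by linarith))
      fun q hq => (h q (ht.trans hq.le)).2
    exact ((h₁.right_cont (t - ε) (by linarith)).comp (f := fun u => u - ε)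
      (continuous_sub_right ε).continuousWithinAt
      fun u (hu : t ≤ u) => mem_Ici.2 (by linarith)).sub_const ε

lemma levyDist_lt_iff_exists_rat (h₁ : MemM ℓ₁) (h₂ : MemM ℓ₂) {δ : ℝ} (hδ1 : δ ≤ 1) :
    levyDist ℓ₁ ℓ₂ < δ ↔ ∃ q : ℚ, 0 < (q : ℝ) ∧ (q : ℝ) < δ ∧ ∀ t : ℚ, 0 ≤ (t : ℝ) →
      ℓ₂ t ≤ ℓ₁ (t + q) + q ∧ ℓ₁ (t - q) - q ≤ ℓ₂ t := by
  rw [levyDist_eq_sInf]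
  constructor
  · intro h
    obtain ⟨ε, hε, hεδ⟩ := (csInf_lt_iff bddBelow_levySet ⟨1, one_mem_levySet h₁ h₂⟩).1 h
    obtain ⟨q, hεq, hqδ⟩ := exists_rat_btwn hεδ
    have hq := mem_levySet_of_le h₁ hε hεq.le (by linarith)
    exact ⟨q, hq.1, hqδ, fun t ht => hq.2 t ht⟩
  · rintro ⟨q, hq0, hqδ, hq⟩
    exact (csInf_le bddBelow_levySet
      (mem_levySet_of_forall_rat h₁ h₂ hq0 (by linarith) hq)).trans_lt hqδ

lemma le_add_of_levyDist_lt (h₁ : MemM ℓ₁) (h₂ : MemM ℓ₂) {δ : ℝ} (hδ : levyDist ℓ₁ ℓ₂ < δ)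
    {u : ℝ} (hu : 0 ≤ u) : ℓ₁ u ≤ ℓ₂ (u + δ) + δ := by
  obtain ⟨ε, hε, hεδ⟩ :=
    (csInf_lt_iff bddBelow_levySet ⟨1, one_mem_levySet h₁ h₂⟩).1 (levyDist_eq_sInf ℓ₁ ℓ₂ ▸ hδ)
  have hlow := (hε.2 (u + ε) (by linarith [hε.1])).2
  rw [add_sub_cancel_right] at hlow
  linarith [h₂.mono (a := u + ε) (b := u + δ) (mem_Ici.2 (by linarith [hε.1]))
    (mem_Ici.2 (by linarith [hε.1])) (by linarith)]


lemma measurable_levyDist_stopAt_max (h₁ : MemM ℓ₁) (h₂ : MemM ℓ₂) :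
    Measurable fun s => levyDist (stopAt ℓ₁ (max s 0)) (stopAt ℓ₂ (max s 0)) := by
  refine measurable_of_Iio fun δ => ?_
  rcases le_or_gt δ 0 with hδ0 | hδ0
  · convert MeasurableSet.empty
    exact eq_empty_of_forall_notMem fun s hs => (mem_Iio.1 hs).not_ge (hδ0.trans levyDist_nonneg)
  rcases lt_or_ge 1 δ with hδ1 | hδ1
  · convert MeasurableSet.univ
    exact eq_univ_of_forall fun s =>
      (levyDist_le_one (h₁.stopAt_memM (le_max_right s 0))
        (h₂.stopAt_memM (le_max_right s 0))).trans_lt hδ1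
  have hpre : (fun s => levyDist (stopAt ℓ₁ (max s 0)) (stopAt ℓ₂ (max s 0))) ⁻¹' Iio δ =
      ⋃ q : ℚ, ⋃ (_ : 0 < (q : ℝ) ∧ (q : ℝ) < δ), ⋂ t : ℚ, ⋂ (_ : 0 ≤ (t : ℝ)),
        ({s | stopAt ℓ₂ (max s 0) t ≤ stopAt ℓ₁ (max s 0) (t + q) + q} ∩
          {s | stopAt ℓ₁ (max s 0) (t - q) - q ≤ stopAt ℓ₂ (max s 0) t}) := by
    ext s
    simp only [mem_preimage, mem_Iio, mem_iUnion, mem_iInter, mem_inter_iff, mem_ofPred_eq,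
      levyDist_lt_iff_exists_rat (h₁.stopAt_memM (le_max_right s 0))
        (h₂.stopAt_memM (le_max_right s 0)) hδ1,
      exists_prop, and_assoc]
  rw [hpre]
  refine .iUnion fun q => .iUnion fun hq => .iInter fun t => .iInter fun ht => .inter ?_ ?_
  · exact measurableSet_le (h₂.monotone_stopAt_max (by linarith)).measurable
      ((h₁.monotone_stopAt_max (by linarith)).measurable.add_const _)
  · exact measurableSet_le ((h₁.monotone_stopAt_max (by linarith)).measurable.sub_const _)
      (h₂.monotone_stopAt_max (by linarith)).measurable

lemma le_dHat_of_le_levyDist (h₁ : MemM ℓ₁) (h₂ : MemM ℓ₂) {a b δ : ℝ} (ha : 0 < a)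
    (hab : a ≤ b) (hδ : δ ≤ 1)
    (h : ∀ s ∈ Icc a b, δ ≤ levyDist (stopAt ℓ₁ s) (stopAt ℓ₂ s)) :
    (b - a) * (Real.exp (-b) * δ) ≤ dHat ℓ₁ ℓ₂ := by
  -- `max s 0` makes `g` measurable on all of `ℝ`; on `Ioi 0` it is the integrand of `dHat`.
  set g : ℝ → ℝ := fun s =>
    Real.exp (-s) * min (levyDist (stopAt ℓ₁ (max s 0)) (stopAt ℓ₂ (max s 0))) 1
  have hg_nonneg : ∀ s, 0 ≤ g s := fun s =>
    mul_nonneg (Real.exp_pos _).le (le_min levyDist_nonneg zero_le_one)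
  have hexp : IntegrableOn (fun s => Real.exp (-s)) (Ioi 0) := by
    simpa using exp_neg_integrableOn_Ioi 0 one_pos
  have hg_int : IntegrableOn g (Ioi 0) := by
    refine Integrable.mono hexp
      (((measurable_neg.exp).mul
        ((measurable_levyDist_stopAt_max h₁ h₂).min measurable_const)).aestronglyMeasurable) ?_
    refine Eventually.of_forall fun s => ?_
    rw [Real.norm_of_nonneg (hg_nonneg s), Real.norm_of_nonneg (Real.exp_pos _).le]
    exact mul_le_of_le_one_right (Real.exp_pos _).le (min_le_right _ _)
  have hdHat : dHat ℓ₁ ℓ₂ = ∫ s in Ioi 0, g s :=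
    setIntegral_congr_fun measurableSet_Ioi fun s (hs : 0 < s) => by
      simp only [g, max_eq_left hs.le]
  have hIcc : Icc a b ⊆ Ioi 0 := fun s hs => ha.trans_le hs.1
  calc (b - a) * (Real.exp (-b) * δ) = ∫ _ in Icc a b, Real.exp (-b) * δ := by
        rw [setIntegral_const, Real.volume_real_Icc_of_le hab, smul_eq_mul]
    _ ≤ ∫ s in Icc a b, g s := by
        refine setIntegral_mono_on (integrableOn_const (by simp)) (hg_int.mono_set hIcc)
          measurableSet_Icc fun s hs => ?_
        have hs0 : 0 < s := hIcc hs
        simp only [g, max_eq_left hs0.le]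
        calc Real.exp (-b) * δ
            ≤ Real.exp (-b) * min (levyDist (stopAt ℓ₁ s) (stopAt ℓ₂ s)) 1 := by
              gcongr; exact le_min (h s hs) hδ
          _ ≤ _ := by gcongr; exacts [le_min levyDist_nonneg zero_le_one, hs.2]
    _ ≤ ∫ s in Ioi 0, g s :=
        setIntegral_mono_set hg_int (Eventually.of_forall hg_nonneg) hIcc.eventuallyLE
    _ = dHat ℓ₁ ℓ₂ := hdHat.symm

end Levy

lemma eventually_le_add_of_tendsto_dHat {ℓn : ℕ → ℝ → ℝ} {ℓ : ℝ → ℝ} (hℓn : ∀ n, MemM (ℓn n))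
    (hℓ : MemM ℓ) (hconv : Tendsto (fun n => dHat (ℓn n) ℓ) atTop (𝓝 0)) {T δ : ℝ}
    (hT : 0 ≤ T) (hδ0 : 0 < δ) (hδ1 : δ ≤ 1) :
    ∀ᶠ n in atTop, ∀ u, 0 ≤ u → u ≤ T → ℓn n u ≤ ℓ (u + δ) + δ := by
  have hc : 0 < Real.exp (-(T + 2)) * δ := mul_pos (Real.exp_pos _) hδ0
  filter_upwards [hconv.eventually (eventually_lt_nhds hc)] with n hn
  by_contra! ⟨u, hu0, huT, hu⟩
  have hfar : ∀ s ∈ Icc (T + 1) (T + 2), δ ≤ levyDist (stopAt (ℓn n) s) (stopAt ℓ s) := by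
    intro s hs
    by_contra! hlt
    have := le_add_of_levyDist_lt ((hℓn n).stopAt_memM (by linarith [hs.1]))
      (hℓ.stopAt_memM (by linarith [hs.1])) hlt hu0
    simp only [stopAt, min_eq_right (by linarith [hs.1] : u ≤ s),
      min_eq_right (by linarith [hs.1] : u + δ ≤ s)] at this
    linarith
  have := le_dHat_of_le_levyDist (hℓn n) hℓ (by linarith) (by linarith) hδ1 hfar
  linarith

lemma hitTime_le_ofReal {x : ℝ → ℝ} {s : ℝ} (hs : 0 ≤ s) (hx : x s ≤ 0) :
    hitTime x ≤ ENNReal.ofReal s :=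
  iInf₂_le s ⟨hs, hx⟩

lemma exists_nonpos_of_hitTime_lt {x : ℝ → ℝ} {r : ℝ} (h : hitTime x < ENNReal.ofReal r) :
    ∃ s, 0 ≤ s ∧ s < r ∧ x s ≤ 0 := by
  simp only [hitTime, iInf_lt_iff] at h
  obtain ⟨s, ⟨hs0, hxs⟩, hsr⟩ := h
  exact ⟨s, hs0, (ENNReal.ofReal_lt_ofReal_iff'.1 hsr).1, hxs⟩

/-- A weakening of `hitTime x ≤ ENNReal.ofReal t` that involves only countably many values
of `x`. -/
def AlmostHitsBefore (x : ℝ → ℝ) (t : ℝ) : Prop :=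
  ∀ k : ℕ, ∃ q : ℚ, 0 ≤ (q : ℝ) ∧ (q : ℝ) ≤ t + 1 / (k + 1) ∧ x q ≤ 1 / (k + 1)

lemma almostHitsBefore_of_hitTime_le {x : ℝ → ℝ}
    (hx : ∀ s, 0 ≤ s → ContinuousWithinAt x (Ici s) s) {t : ℝ} (ht : 0 ≤ t)
    (h : hitTime x ≤ ENNReal.ofReal t) : AlmostHitsBefore x t := by
  intro k
  set ε : ℝ := 1 / (k + 1)
  have hε : 0 < ε := by positivity
  obtain ⟨s, hs0, hst, hxs⟩ := exists_nonpos_of_hitTime_lt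
    (h.trans_lt ((ENNReal.ofReal_lt_ofReal_iff (by positivity)).2 (by linarith : t < t + ε / 2)))
  have hnear : ∀ᶠ u in 𝓝[≥] s, x u < ε ∧ u < t + ε :=
    ((hx s hs0).eventually (eventually_lt_nhds (hxs.trans_lt hε))).and
      (eventually_nhdsWithin_of_eventually_nhds (eventually_lt_nhds (by linarith)))
  obtain ⟨a, hsa, hsub⟩ := mem_nhdsGE_iff_exists_Ico_subset.1 hnear
  obtain ⟨q, hsq, hqa⟩ := exists_rat_btwn (mem_Ioi.1 hsa)
  obtain ⟨hxq, hqt⟩ := hsub ⟨hsq.le, hqa⟩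
  exact ⟨q, by linarith, hqt.le, hxq.le⟩

lemma measurableSet_almostHitsBefore {Ω : Type*} [MeasurableSpace Ω] {X : ℝ → Ω → ℝ}
    (hX : ∀ s, Measurable (X s)) (t : ℝ) :
    MeasurableSet {ω | AlmostHitsBefore (fun s => X s ω) t} := by
  simp only [AlmostHitsBefore, ofPred_forall, ofPred_exists, ofPred_and]
  exact .iInter fun k => .iUnion fun q => (MeasurableSet.const _).inter
    ((MeasurableSet.const _).inter (measurableSet_le (hX q) measurable_const))

section Pathwise

variable {G : ℝ → ℝ} (hGcont : ContinuousOn G (Icc (-1) 1)) (hGmono : MonotoneOn G (Icc (-1) 1))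
  {ℓ : ℝ → ℝ} (hℓ : MemM ℓ) {y : ℝ → ℝ} (hy : ContinuousOn y (Ici 0))
include hGcont hGmono hℓ hy

lemma hitTime_le_of_forall_exists_le {t : ℝ}
    (h : ∀ j : ℕ, ∃ q, 0 ≤ q ∧ q ≤ t + 1 / (j + 1) ∧
      y q ≤ 1 / (j + 1) + G (min (ℓ (q + 1 / (j + 1)) + 1 / (j + 1)) 1)) :
    hitTime (fun s => y s - G (ℓ s)) ≤ ENNReal.ofReal t := by
  choose q hq0 hqt hqy using h
  set e : ℕ → ℝ := fun j => 1 / (j + 1)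
  have he0 : ∀ j, 0 ≤ e j := fun j => by positivity
  have he : Tendsto e atTop (𝓝 0) := tendsto_one_div_add_atTop_nhds_zero_nat
  obtain ⟨s, hs, φ, hφ, hqφ⟩ := isCompact_Icc.tendsto_subseq (s := Icc 0 (t + 1)) (x := q)
    fun j => ⟨hq0 j, (hqt j).trans (by gcongr; exact div_le_one_of_le₀ (by simp) (by positivity))⟩
  have heφ : Tendsto (e ∘ φ) atTop (𝓝 0) := he.comp hφ.tendsto_atTop
  have hst : s ≤ t := le_of_tendsto_of_tendsto' (g := fun j => t + e (φ j)) hqφ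
    (by simpa only [add_zero, Function.comp_apply] using heφ.const_add t) fun j => hqt (φ j)
  have hys : Tendsto (fun j => y (q (φ j))) atTop (𝓝 (y s)) :=
    (hy s hs.1).tendsto.comp (tendsto_nhdsWithin_iff.2 ⟨hqφ, .of_forall fun j => hq0 (φ j)⟩)
  have hright : ∀ r > s, y s ≤ G (ℓ r) := by
    intro r hr
    have hr1 : -1 ≤ r := by linarith [hs.1]
    have hmin : Tendsto (fun j => min (ℓ r + e (φ j)) 1) atTop (𝓝[Icc (-1) 1] (ℓ r)) := by
      refine tendsto_nhdsWithin_iff.2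
        ⟨?_, .of_forall fun j => hℓ.min_add_mem_Icc hr1 (he0 (φ j))⟩
      simpa only [add_zero, min_eq_left (hℓ.le_one r hr1), Function.comp_apply] using
        (heφ.const_add (ℓ r)).min (tendsto_const_nhds (x := (1 : ℝ)))
    have hlim := heφ.add ((hGcont _ (hℓ.mem_Icc hr1)).tendsto.comp hmin)
    rw [zero_add] at hlim
    refine le_of_tendsto_of_tendsto hys hlim ?_
    filter_upwards [(hqφ.add heφ).eventually (eventually_lt_nhds (by simpa using hr))] with j hj
    have hqj : -1 ≤ q (φ j) + e (φ j) := by linarith [hq0 (φ j), he0 (φ j)]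
    change y (q (φ j)) ≤ e (φ j) + G (min (ℓ r + e (φ j)) 1)
    refine (hqy (φ j)).trans ((add_le_add_iff_left _).2 (hGmono
      (hℓ.min_add_mem_Icc hqj (he0 (φ j))) (hℓ.min_add_mem_Icc hr1 (he0 (φ j))) ?_))
    exact min_le_min_right 1 (add_le_add_left (hℓ.mono hqj hr1 hj.le) _)
  have hys_le : y s ≤ G (ℓ s) := ge_of_tendsto
    ((hℓ.continuousWithinAt_comp hGcont (by linarith [hs.1])).mono Ioi_subset_Ici_self)
    (eventually_nhdsWithin_of_forall hright)
  exact (hitTime_le_ofReal hs.1 (by simpa using hys_le)).trans (ENNReal.ofReal_le_ofReal hst)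

lemma hitTime_le_of_frequently_almostHitsBefore {ℓn : ℕ → ℝ → ℝ} (hℓn : ∀ n, MemM (ℓn n))
    (hconv : Tendsto (fun n => dHat (ℓn n) ℓ) atTop (𝓝 0)) {t : ℝ} (ht : 0 ≤ t)
    (h : ∃ᶠ n in atTop, AlmostHitsBefore (fun s => y s - G (ℓn n s)) t) :
    hitTime (fun s => y s - G (ℓ s)) ≤ ENNReal.ofReal t := by
  refine hitTime_le_of_forall_exists_le hGcont hGmono hℓ hy fun j => ?_
  set δ : ℝ := 1 / (j + 1)
  have hδ0 : 0 < δ := by positivity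
  have hδ1 : δ ≤ 1 := div_le_one_of_le₀ (by simp) (by positivity)
  obtain ⟨n, hnear, hclose⟩ := (h.and_eventually (eventually_le_add_of_tendsto_dHat hℓn hℓ hconv
    (by linarith : 0 ≤ t + 1) hδ0 hδ1)).exists
  obtain ⟨q, hq0, hqt, hyq⟩ := hnear j
  have hq1 : (q : ℝ) ≤ t + 1 := hqt.trans (by linarith)
  have hGq : G (ℓn n q) ≤ G (min (ℓ (q + δ) + δ) 1) :=
    hGmono ((hℓn n).mem_Icc (by linarith)) (hℓ.min_add_mem_Icc (by linarith) hδ0.le)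
      (le_min (hclose q hq0 hq1) ((hℓn n).le_one q (by linarith)))
  exact ⟨q, hq0, hqt, by linarith⟩

end Pathwise

lemma limsup_toReal_measure_le {Ω : Type*} [MeasurableSpace Ω] {μ : Measure Ω}
    [IsFiniteMeasure μ] {A M : ℕ → Set Ω} {E : Set Ω} (hM : ∀ n, MeasurableSet (M n))
    (hAM : ∀ n, ∀ᵐ ω ∂μ, ω ∈ A n → ω ∈ M n) (hME : ∀ᵐ ω ∂μ, ω ∈ limsup M atTop → ω ∈ E) :
    limsup (fun n => (μ (A n)).toReal) atTop ≤ (μ E).toReal := by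
  have htail : Tendsto (fun n => μ (⋃ i ≥ n, M i)) atTop (𝓝 (μ (limsup M atTop))) := by
    rw [limsup_eq_iInf_iSup_of_nat]
    exact tendsto_measure_iInter_atTop
      (fun n => (MeasurableSet.biUnion (to_countable _) fun i _ => hM i).nullMeasurableSet)
      (fun m n hmn => biUnion_subset_biUnion_left fun i (hi : n ≤ i) => hmn.trans hi)
      ⟨0, measure_ne_top _ _⟩
  have hle : limsup (fun n => μ (A n)) atTop ≤ μ E := calc
    _ ≤ limsup (fun n => μ (⋃ i ≥ n, M i)) atTop := limsup_le_limsup (.of_forall fun n =>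
        (measure_mono_ae (s := A n) (t := M n) (hAM n)).trans
          (measure_mono (subset_biUnion_of_mem (u := M) (show n ≤ n from le_rfl))))
    _ = μ (limsup M atTop) := htail.limsup_eq
    _ ≤ μ E := measure_mono_ae (s := limsup M atTop) (t := E) hME
  rw [ENNReal.limsup_toReal_eq (measure_ne_top μ univ)
    (.of_forall fun n => measure_mono (subset_univ _))]
  exact ENNReal.toReal_mono (measure_ne_top _ _) hle

theorem stmt8_general (β : ℝ) (G : ℝ → ℝ)
    (hGcont : ContinuousOn G (Set.Icc (-1 : ℝ) 1))
    (hGmono : MonotoneOn G (Set.Icc (-1 : ℝ) 1))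
    {Ω : Type*} [MeasurableSpace Ω] (P : Measure Ω) (θ : Measure ℝ)
    (Z : Ω → ℝ) (B : ℝ → Ω → ℝ) (hsetup : MVSetup P θ Z B)
    (ℓn : ℕ → ℝ → ℝ) (ℓ : ℝ → ℝ) (hℓn : ∀ n, MemM (ℓn n)) (hℓ : MemM ℓ)
    (hconv : Filter.Tendsto (fun n => dHat (ℓn n) ℓ) Filter.atTop (nhds 0)) :
    ∀ t : ℝ, 0 ≤ t →
      Filter.limsup (fun n => GammaOp P Z B β G (ℓn n) t) Filter.atTop ≤
        GammaOp P Z B β G ℓ t := by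
  intro t ht
  have := hsetup.isProb
  simp only [GammaOp, if_neg (not_lt.2 ht)]
  have hy : ∀ ω, ContinuousOn (fun s => B s ω) (Ici 0) →
      ContinuousOn (fun s => Z ω + β * s + B s ω) (Ici 0) := fun ω hB => by fun_prop
  refine limsup_toReal_measure_le
    (M := fun n => {ω | AlmostHitsBefore (fun s => Z ω + β * s + B s ω - G (ℓn n s)) t})
    (fun n => measurableSet_almostHitsBefore
      (fun s => ((hsetup.z_meas.add_const _).add (hsetup.bm.meas s)).sub_const _) t)
    (fun n => ?_) ?_
  · filter_upwards [hsetup.bm.cont] with ω hB hA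
    refine almostHitsBefore_of_hitTime_le (fun s hs => ?_) ht hA
    exact ((hy ω hB s hs).mono (Ici_subset_Ici.2 hs)).sub
      ((hℓn n).continuousWithinAt_comp hGcont (by linarith))
  · filter_upwards [hsetup.bm.cont] with ω hB hM
    exact hitTime_le_of_frequently_almostHitsBefore hGcont hGmono hℓ (hy ω hB) hℓn hconv ht
      (mem_limsup_iff_frequently_mem.1 hM)

/-- Lemma 3.1: `Γ` is upper semicontinuous along `d̂`-convergent sequences
in `𝕄`. -/
theorem stmt8 (β : ℝ) (G : ℝ → ℝ)
    (hGcont : ContinuousOn G (Set.Icc (-1 : ℝ) 1))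
    (hGmono : MonotoneOn G (Set.Icc (-1 : ℝ) 1)) (hG0 : G 0 = 0)
    {Ω : Type*} [MeasurableSpace Ω] (P : Measure Ω) (θ : Measure ℝ)
    (Z : Ω → ℝ) (B : ℝ → Ω → ℝ) (hsetup : MVSetup P θ Z B)
    (ℓn : ℕ → ℝ → ℝ) (ℓ : ℝ → ℝ) (hℓn : ∀ n, MemM (ℓn n)) (hℓ : MemM ℓ)
    (hconv : Filter.Tendsto (fun n => dHat (ℓn n) ℓ) Filter.atTop (nhds 0)) :
    ∀ t : ℝ, 0 ≤ t →
      Filter.limsup (fun n => GammaOp P Z B β G (ℓn n) t) Filter.atTop ≤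
        GammaOp P Z B β G ℓ t :=
  stmt8_general β G hGcont hGmono P θ Z B hsetup ℓn ℓ hℓn hℓ hconv
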